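/- arXiv:1007.4692 — 2 statements merged into one kernel-verified Lean document; each statement's English description precedes it below -/
import Mathlib

section
/- There exists a constant C > 0 such that for every n ≥ 1 and all x, y ∈ ℝⁿ×ℝⁿ, ‖x + y‖_{Z_2^n} ≤ C·(‖x‖_{Z_2^n} + ‖y‖_{Z_2^n}); that is, ‖·‖_{Z_2^n} is a quasi-norm with quasi-triangle constant independent of n. -/
open scoped BigOperators

/-- The Euclidean norm on `ℝⁿ`. -/
noncomputable def l2 {n : ℕ} (b : Fin n → ℝ) : ℝ := Real.sqrt (∑ j, b j ^ 2)

/-- The Kalton–Peck map `F(b)_j = b_j log(|b_j|/‖b‖₂)`, with `F(b)_j = 0` when `b_j = 0`. -/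
noncomputable def KPF {n : ℕ} (b : Fin n → ℝ) : Fin n → ℝ :=
  fun j => if b j = 0 then 0 else b j * Real.log (|b j| / l2 b)

/-- The Kalton–Peck quasi-norm `‖(a,b)‖ = ‖b‖₂ + ‖a - F(b)‖₂` on `ℝⁿ × ℝⁿ`. -/
noncomputable def znorm {n : ℕ} (x : (Fin n → ℝ) × (Fin n → ℝ)) : ℝ :=
  l2 x.2 + l2 (x.1 - KPF x.2)

/-- Operator "norm" `sup_{x ≠ 0} N_W(T x) / N_V(x)` of a map `T` between spaces
equipped with (quasi-)norms `N_V`, `N_W`. -/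
noncomputable def ratioSup {V W : Type*} [Zero V] (NV : V → ℝ) (NW : W → ℝ) (T : V → W) : ℝ :=
  ⨆ x : {x : V // x ≠ 0}, NW (T x.1) / NV x.1

/-!
Write `φ(x) = x log |x|`. Since `log 0 = 0`, the Kalton–Peck map splits as
`F(b) = φ ∘ b - log ‖b‖₂ • b`. The scalar map `φ` is quasi-additive,
`|φ(x+y) - φ(x) - φ(y)| ≤ 3 (|x| + |y|)`: by `φ(σx) = σφ(x) + log σ · σx` the defect is
1-homogeneous, and after normalising `|x| + |y| = 1` each term is at most `1`. The linear part
`log ‖b‖₂ • b` has defect `(log u - log M) • (b+c) - (log s - log M) • b - (log t - log M) • c`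
with `s, t, u` the norms of `b, c, b + c` and `M = s + t`, and `v |log v - log M| ≤ M` for
`0 ≤ v ≤ M`. Hence `‖F(b+c) - F(b) - F(c)‖₂ ≤ 6 (‖b‖₂ + ‖c‖₂)` in every dimension, and the
quasi-triangle inequality for `znorm` follows with constant `7`.
-/

open Real

section l2

variable {n : ℕ}

lemma l2_eq_norm (b : Fin n → ℝ) : l2 b = ‖WithLp.toLp 2 b‖ := by
  simp [EuclideanSpace.norm_eq, l2, sq_abs]

lemma l2_nonneg (b : Fin n → ℝ) : 0 ≤ l2 b := sqrt_nonneg _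

lemma l2_eq_zero {b : Fin n → ℝ} : l2 b = 0 ↔ b = 0 := by
  rw [l2_eq_norm, norm_eq_zero, WithLp.toLp_eq_zero]

lemma l2_add_le (b c : Fin n → ℝ) : l2 (b + c) ≤ l2 b + l2 c := by
  simpa only [l2_eq_norm, WithLp.toLp_add] using norm_add_le _ _

lemma l2_sub_le (b c : Fin n → ℝ) : l2 (b - c) ≤ l2 b + l2 c := by
  simpa only [l2_eq_norm, WithLp.toLp_sub] using norm_sub_le _ _

lemma l2_smul (r : ℝ) (b : Fin n → ℝ) : l2 (r • b) = |r| * l2 b := by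
  simp only [l2_eq_norm, WithLp.toLp_smul, norm_smul, Real.norm_eq_abs]

lemma l2_abs (b : Fin n → ℝ) : l2 (fun j => |b j|) = l2 b := by
  simp [l2, sq_abs]

lemma l2_le_l2_of_abs_le {b c : Fin n → ℝ} (h : ∀ j, |b j| ≤ |c j|) : l2 b ≤ l2 c :=
  sqrt_le_sqrt (Finset.sum_le_sum fun j _ => sq_le_sq.2 (h j))

lemma l2_le_mul_add_of_abs_le {f b c : Fin n → ℝ} {K : ℝ} (hK : 0 ≤ K)
    (h : ∀ j, |f j| ≤ K * (|b j| + |c j|)) : l2 f ≤ K * (l2 b + l2 c) :=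
  calc l2 f ≤ l2 (K • ((fun j => |b j|) + fun j => |c j|)) :=
        l2_le_l2_of_abs_le fun j => (h j).trans (le_abs_self _)
    _ = K * l2 ((fun j => |b j|) + fun j => |c j|) := by rw [l2_smul, abs_of_nonneg hK]
    _ ≤ K * (l2 b + l2 c) := by
        rw [← l2_abs b, ← l2_abs c]
        exact mul_le_mul_of_nonneg_left (l2_add_le _ _) hK

end l2

noncomputable def mulLogAbs (x : ℝ) : ℝ := x * log |x|

lemma mulLogAbs_mul (r x : ℝ) : mulLogAbs (r * x) = r * mulLogAbs x + log |r| * (r * x) := by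
  rcases eq_or_ne r 0 with rfl | hr
  · simp [mulLogAbs]
  rcases eq_or_ne x 0 with rfl | hx
  · simp [mulLogAbs]
  rw [mulLogAbs, mulLogAbs, abs_mul, log_mul (abs_ne_zero.2 hr) (abs_ne_zero.2 hx)]
  ring

lemma abs_mulLogAbs_le_one {x : ℝ} (hx : |x| ≤ 1) : |mulLogAbs x| ≤ 1 := by
  rcases eq_or_ne x 0 with rfl | hx0
  · simp [mulLogAbs]
  have := abs_log_mul_self_lt |x| (abs_pos.2 hx0) hx
  rw [mulLogAbs, abs_mul, mul_comm, ← abs_abs x, ← abs_mul, abs_abs]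
  exact this.le

lemma abs_mulLogAbs_add_sub_le (x y : ℝ) :
    |mulLogAbs (x + y) - mulLogAbs x - mulLogAbs y| ≤ 3 * (|x| + |y|) := by
  set σ := |x| + |y|
  rcases (show 0 ≤ σ by positivity).eq_or_lt with hσ | hσ
  · obtain ⟨hx, hy⟩ := (add_eq_zero_iff_of_nonneg (abs_nonneg x) (abs_nonneg y)).1 hσ.symm
    simpa [abs_eq_zero.1 hx, abs_eq_zero.1 hy, mulLogAbs] using hσ.le
  have hX : |x / σ| ≤ 1 := by
    rw [abs_div, abs_of_pos hσ, div_le_one hσ]; linarith [abs_nonneg y]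
  have hY : |y / σ| ≤ 1 := by
    rw [abs_div, abs_of_pos hσ, div_le_one hσ]; linarith [abs_nonneg x]
  have hXY : |x / σ + y / σ| ≤ 1 := by
    rw [← add_div, abs_div, abs_of_pos hσ, div_le_one hσ]; exact abs_add_le x y
  have homog : mulLogAbs (x + y) - mulLogAbs x - mulLogAbs y
      = σ * (mulLogAbs (x / σ + y / σ) - mulLogAbs (x / σ) - mulLogAbs (y / σ)) := by
    have hx : x = σ * (x / σ) := (mul_div_cancel₀ x hσ.ne').symm
    have hy : y = σ * (y / σ) := (mul_div_cancel₀ y hσ.ne').symm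
    conv_lhs => rw [hx, hy, ← mul_add, mulLogAbs_mul, mulLogAbs_mul, mulLogAbs_mul]
    ring
  rw [homog, abs_mul, abs_of_pos hσ, mul_comm]
  gcongr
  linarith [abs_sub (mulLogAbs (x / σ + y / σ) - mulLogAbs (x / σ)) (mulLogAbs (y / σ)),
    abs_sub (mulLogAbs (x / σ + y / σ)) (mulLogAbs (x / σ)), abs_mulLogAbs_le_one hXY,
    abs_mulLogAbs_le_one hX, abs_mulLogAbs_le_one hY]

lemma abs_log_sub_log_mul_le {v M : ℝ} (hv : 0 ≤ v) (hvM : v ≤ M) : |log v - log M| * v ≤ M := by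
  rcases hv.eq_or_lt with rfl | hv
  · simpa using hv.trans hvM
  have hM : 0 < M := hv.trans_le hvM
  rw [abs_sub_comm, ← log_div hM.ne' hv.ne', abs_of_nonneg (log_nonneg ((one_le_div hv).2 hvM))]
  have := log_le_sub_one_of_pos (div_pos hM hv)
  calc log (M / v) * v ≤ (M / v - 1) * v := mul_le_mul_of_nonneg_right this hv.le
    _ = M - v := by field_simp
    _ ≤ M := by linarith

section KPF

variable {n : ℕ}

lemma KPF_eq (b : Fin n → ℝ) : KPF b = mulLogAbs ∘ b - log (l2 b) • b := by
  funext j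
  by_cases hj : b j = 0
  · simp [KPF, hj, mulLogAbs]
  have hb : l2 b ≠ 0 := fun h => hj (by rw [l2_eq_zero.1 h, Pi.zero_apply])
  simp only [KPF, hj, if_false, Pi.sub_apply, Function.comp_apply, Pi.smul_apply, smul_eq_mul,
    mulLogAbs, log_div (abs_ne_zero.2 hj) hb]
  ring

lemma l2_smul_log_sub_le {b : Fin n → ℝ} {M : ℝ} (h : l2 b ≤ M) :
    l2 ((log (l2 b) - log M) • b) ≤ M := by
  rw [l2_smul]
  exact abs_log_sub_log_mul_le (l2_nonneg b) h

lemma l2_KPF_add_sub_le (b c : Fin n → ℝ) :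
    l2 (KPF (b + c) - KPF b - KPF c) ≤ 6 * (l2 b + l2 c) := by
  set M := l2 b + l2 c
  set Ψ := mulLogAbs ∘ (b + c) - mulLogAbs ∘ b - mulLogAbs ∘ c
  set P := (log (l2 (b + c)) - log M) • (b + c)
  set Q := (log (l2 b) - log M) • b
  set R := (log (l2 c) - log M) • c
  have hΨ : l2 Ψ ≤ 3 * M :=
    l2_le_mul_add_of_abs_le (by norm_num) fun j => abs_mulLogAbs_add_sub_le (b j) (c j)
  have hP : l2 P ≤ M := l2_smul_log_sub_le (l2_add_le b c)
  have hQ : l2 Q ≤ M := l2_smul_log_sub_le (le_add_of_nonneg_right (l2_nonneg c))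
  have hR : l2 R ≤ M := l2_smul_log_sub_le (le_add_of_nonneg_left (l2_nonneg b))
  have hsplit : KPF (b + c) - KPF b - KPF c = Ψ - P + Q + R := by
    rw [KPF_eq, KPF_eq, KPF_eq]
    module
  rw [hsplit]
  linarith [l2_add_le (Ψ - P + Q) R, l2_add_le (Ψ - P) Q, l2_sub_le Ψ P]

end KPF

lemma znorm_add_le {n : ℕ} (x y : (Fin n → ℝ) × (Fin n → ℝ)) :
    znorm (x + y) ≤ 7 * (znorm x + znorm y) := by
  obtain ⟨a, b⟩ := x
  obtain ⟨a', b'⟩ := y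
  simp only [znorm, Prod.mk_add_mk]
  have hsplit : a + a' - KPF (b + b')
      = (a - KPF b) + (a' - KPF b') - (KPF (b + b') - KPF b - KPF b') := by abel
  rw [hsplit]
  linarith [l2_sub_le ((a - KPF b) + (a' - KPF b')) (KPF (b + b') - KPF b - KPF b'),
    l2_add_le (a - KPF b) (a' - KPF b'), l2_add_le b b', l2_KPF_add_sub_le b b',
    l2_nonneg b, l2_nonneg b', l2_nonneg (a - KPF b), l2_nonneg (a' - KPF b')]

/-- The Kalton–Peck quasi-norm satisfies a quasi-triangle inequality with constant
independent of the dimension. -/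
theorem znorm_is_quasinorm :
    ∃ C : ℝ, 0 < C ∧ ∀ n : ℕ, 1 ≤ n → ∀ x y : (Fin n → ℝ) × (Fin n → ℝ),
      znorm (x + y) ≤ C * (znorm x + znorm y) :=
  ⟨7, by norm_num, fun _ _ => znorm_add_le⟩
end

section
/- There exist constants c₁, c₂ > 0 such that for every n ≥ 2, c₁·√n·log n ≤ sup{ ‖x‖_{Z_2^n} / ‖x‖_∞ : x ∈ ℝⁿ×ℝⁿ, x ≠ 0 } ≤ c₂·√n·log n; that is, the operator norm of the identity map from ℓ_∞^{2n} to Z_2^n is of order √n·log n. -/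
open scoped BigOperators

/-- The supremum norm on `ℝⁿ × ℝⁿ ≅ ℝ^{2n}`: the max of the absolute values of all `2n`
coordinates. -/
noncomputable def linf {n : ℕ} (x : (Fin n → ℝ) × (Fin n → ℝ)) : ℝ :=
  max (⨆ j, |x.1 j|) (⨆ j, |x.2 j|)

/-!
Upper bound: writing `s = ‖b‖₂`, the inequality `log y ≤ y - 1` at `y = s / (c |b_j|)` gives
`|F(b)_j| ≤ |b_j| log c + s / c` for every `c > 0`. Taking `c = √n` and `s ≤ √n ‖b‖_∞`, every
coordinate of `a - F(b)` is `O(log n · ‖x‖_∞)`, so `‖x‖_{Z_2^n} = O(√n log n · ‖x‖_∞)`.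
Lower bound: `F(𝟙) = -(log n / 2) 𝟙`, so `x = (0, 𝟙)` has `‖x‖_∞ = 1` and
`‖x‖_{Z_2^n} = √n (1 + log n / 2)`.
-/

section RatioSup

variable {V W : Type*} [Zero V] {NV : V → ℝ} {NW : W → ℝ} {T : V → W} {C : ℝ}

lemma div_le_ratioSup (hNV : ∀ x ≠ 0, 0 < NV x) (hC : ∀ x ≠ 0, NW (T x) ≤ C * NV x)
    {x : V} (hx : x ≠ 0) : NW (T x) / NV x ≤ ratioSup NV NW T := by
  refine le_ciSup (f := fun x : {x : V // x ≠ 0} => NW (T x.1) / NV x.1) ⟨C, ?_⟩ ⟨x, hx⟩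
  rintro _ ⟨y, rfl⟩
  exact (div_le_iff₀ (hNV y.1 y.2)).mpr (hC y.1 y.2)

lemma ratioSup_le [Nontrivial V] (hNV : ∀ x ≠ 0, 0 < NV x)
    (hC : ∀ x ≠ 0, NW (T x) ≤ C * NV x) : ratioSup NV NW T ≤ C := by
  obtain ⟨x₀, hx₀⟩ := exists_ne (0 : V)
  have : Nonempty {x : V // x ≠ 0} := ⟨⟨x₀, hx₀⟩⟩
  exact ciSup_le fun x => (div_le_iff₀ (hNV x.1 x.2)).mpr (hC x.1 x.2)

end RatioSup

section L2

variable {n : ℕ}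

lemma abs_le_l2 (b : Fin n → ℝ) (j : Fin n) : |b j| ≤ l2 b :=
  Real.abs_le_sqrt <| Finset.single_le_sum (f := fun j => b j ^ 2)
    (fun _ _ => sq_nonneg _) (Finset.mem_univ j)

lemma l2_le_sqrt_mul {b : Fin n → ℝ} {M : ℝ} (hM : 0 ≤ M) (h : ∀ j, |b j| ≤ M) :
    l2 b ≤ Real.sqrt n * M := by
  have hsum : ∑ j, b j ^ 2 ≤ n * M ^ 2 := by
    calc ∑ j, b j ^ 2 ≤ ∑ _j : Fin n, M ^ 2 :=
          Finset.sum_le_sum fun j _ => sq_le_sq' (abs_le.mp (h j)).1 (abs_le.mp (h j)).2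
      _ = n * M ^ 2 := by simp
  calc l2 b ≤ Real.sqrt (n * M ^ 2) := Real.sqrt_le_sqrt hsum
    _ = Real.sqrt n * M := by rw [Real.sqrt_mul n.cast_nonneg, Real.sqrt_sq hM]

lemma l2_const (c : ℝ) : l2 (fun _ : Fin n => c) = Real.sqrt n * |c| := by
  simp [l2, Real.sqrt_mul n.cast_nonneg, Real.sqrt_sq_eq_abs]

end L2

section LInf

variable {n : ℕ}

lemma abs_fst_le_linf (x : (Fin n → ℝ) × (Fin n → ℝ)) (j : Fin n) : |x.1 j| ≤ linf x :=
  (le_ciSup (f := fun j => |x.1 j|) (Set.finite_range _).bddAbove j).trans (le_max_left _ _)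

lemma abs_snd_le_linf (x : (Fin n → ℝ) × (Fin n → ℝ)) (j : Fin n) : |x.2 j| ≤ linf x :=
  (le_ciSup (f := fun j => |x.2 j|) (Set.finite_range _).bddAbove j).trans (le_max_right _ _)

lemma linf_pos {x : (Fin n → ℝ) × (Fin n → ℝ)} (hx : x ≠ 0) : 0 < linf x := by
  rcases not_and_or.mp (mt (fun h => Prod.ext h.1 h.2) hx) with h | h
  · obtain ⟨j, hj⟩ := Function.ne_iff.mp h
    exact (abs_pos.mpr hj).trans_le (abs_fst_le_linf x j)
  · obtain ⟨j, hj⟩ := Function.ne_iff.mp h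
    exact (abs_pos.mpr hj).trans_le (abs_snd_le_linf x j)

end LInf

section KaltonPeck

variable {n : ℕ}

lemma abs_KPF_le (b : Fin n → ℝ) (j : Fin n) {c : ℝ} (hc : 0 < c) :
    |KPF b j| ≤ |b j| * Real.log c + l2 b / c := by
  by_cases hbj : b j = 0
  · simpa [KPF, hbj] using div_nonneg ((abs_nonneg _).trans (abs_le_l2 b j)) hc.le
  have hu : 0 < |b j| := abs_pos.mpr hbj
  have hs : 0 < l2 b := hu.trans_le (abs_le_l2 b j)
  have hlog_nonpos : Real.log (|b j| / l2 b) ≤ 0 :=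
    Real.log_nonpos (by positivity) ((div_le_one hs).mpr (abs_le_l2 b j))
  have hlog_ge : 1 - l2 b / (c * |b j|) - Real.log c ≤ Real.log (|b j| / l2 b) := by
    have h := Real.one_sub_inv_le_log_of_pos (x := c * |b j| / l2 b) (by positivity)
    rw [inv_div, mul_div_assoc, Real.log_mul hc.ne' (by positivity)] at h
    linarith
  have hmul : |b j| - l2 b / c - |b j| * Real.log c ≤ |b j| * Real.log (|b j| / l2 b) := by
    have h := mul_le_mul_of_nonneg_left hlog_ge hu.le
    have hcancel : |b j| * (l2 b / (c * |b j|)) = l2 b / c := by field_simp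
    rwa [mul_sub, mul_sub, mul_one, hcancel] at h
  simp only [KPF, if_neg hbj, abs_mul, abs_of_nonpos hlog_nonpos, mul_neg]
  linarith

lemma abs_KPF_le_of_abs_le [NeZero n] {b : Fin n → ℝ} {M : ℝ} (hM : 0 ≤ M)
    (h : ∀ j, |b j| ≤ M) (j : Fin n) : |KPF b j| ≤ M * (Real.log n / 2 + 1) := by
  have hn : (0 : ℝ) < n := by exact_mod_cast Nat.pos_of_ne_zero (NeZero.ne n)
  have hlog : 0 ≤ Real.log (Real.sqrt n) :=
    Real.log_nonneg (Real.one_le_sqrt.mpr (by exact_mod_cast NeZero.one_le))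
  have hs : l2 b / Real.sqrt n ≤ M := by
    rw [div_le_iff₀ (Real.sqrt_pos.mpr hn), mul_comm]
    exact l2_le_sqrt_mul hM h
  calc |KPF b j| ≤ |b j| * Real.log (Real.sqrt n) + l2 b / Real.sqrt n :=
        abs_KPF_le b j (Real.sqrt_pos.mpr hn)
    _ ≤ M * Real.log (Real.sqrt n) + M := by gcongr; exact h j
    _ = M * (Real.log n / 2 + 1) := by rw [Real.log_sqrt hn.le]; ring

lemma znorm_le_linf [NeZero n] (x : (Fin n → ℝ) × (Fin n → ℝ)) :
    znorm x ≤ Real.sqrt n * (Real.log n / 2 + 3) * linf x := by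
  have hM : 0 ≤ linf x := (abs_nonneg _).trans (abs_fst_le_linf x 0)
  have hsnd : l2 x.2 ≤ Real.sqrt n * linf x := l2_le_sqrt_mul hM (abs_snd_le_linf x)
  have hdiff : l2 (x.1 - KPF x.2) ≤ Real.sqrt n * (linf x * (Real.log n / 2 + 2)) := by
    refine l2_le_sqrt_mul (by positivity) fun j => ?_
    calc |x.1 j - KPF x.2 j| ≤ |x.1 j| + |KPF x.2 j| := abs_sub _ _
      _ ≤ linf x + linf x * (Real.log n / 2 + 1) :=
          add_le_add (abs_fst_le_linf x j) (abs_KPF_le_of_abs_le hM (abs_snd_le_linf x) j)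
      _ = linf x * (Real.log n / 2 + 2) := by ring
  calc znorm x ≤ Real.sqrt n * linf x + Real.sqrt n * (linf x * (Real.log n / 2 + 2)) :=
        add_le_add hsnd hdiff
    _ = Real.sqrt n * (Real.log n / 2 + 3) * linf x := by ring

lemma KPF_const_one [NeZero n] :
    KPF (fun _ : Fin n => (1 : ℝ)) = fun _ => -(Real.log n / 2) := by
  have hn : (0 : ℝ) < n := by exact_mod_cast Nat.pos_of_ne_zero (NeZero.ne n)
  funext j
  simp [KPF, l2_const, Real.log_inv, Real.log_sqrt hn.le]

lemma znorm_zero_one [NeZero n] :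
    znorm ((0 : Fin n → ℝ), fun _ => (1 : ℝ)) = Real.sqrt n * (1 + Real.log n / 2) := by
  have hdiff : (0 : Fin n → ℝ) - (fun _ => -(Real.log n / 2)) = fun _ => Real.log n / 2 := by
    funext j; simp
  simp only [znorm, KPF_const_one, hdiff, l2_const, abs_one, abs_of_nonneg (by positivity :
    0 ≤ Real.log n / 2)]
  ring

lemma linf_zero_one [NeZero n] : linf ((0 : Fin n → ℝ), fun _ => (1 : ℝ)) = 1 := by
  simp [linf]

end KaltonPeck

/-- The operator norm of the identity `ℓ_∞^{2n} → Z_2^n` is of order `√n · log n`. -/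
theorem linf_to_znorm_opnorm :
    ∃ c₁ : ℝ, 0 < c₁ ∧ ∃ c₂ : ℝ, 0 < c₂ ∧ ∀ n : ℕ, 2 ≤ n →
      c₁ * Real.sqrt n * Real.log n ≤
        ratioSup linf znorm (fun x : (Fin n → ℝ) × (Fin n → ℝ) => x) ∧
      ratioSup linf znorm (fun x : (Fin n → ℝ) × (Fin n → ℝ) => x) ≤
        c₂ * Real.sqrt n * Real.log n := by
  refine ⟨1 / 2, by norm_num, 7, by norm_num, fun n hn => ?_⟩
  have : NeZero n := ⟨by omega⟩
  have hlog : 1 / 2 ≤ Real.log n := by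
    have h2 : Real.log 2 ≤ Real.log n := Real.log_le_log two_pos (by exact_mod_cast hn)
    linarith [Real.log_two_gt_d9]
  have hupper : ∀ x : (Fin n → ℝ) × (Fin n → ℝ), x ≠ 0 →
      znorm x ≤ 7 * Real.sqrt n * Real.log n * linf x := fun x hx =>
    (znorm_le_linf x).trans <| mul_le_mul_of_nonneg_right
      (by nlinarith [Real.sqrt_nonneg n]) (linf_pos hx).le
  have hx₀ : ((0 : Fin n → ℝ), fun _ : Fin n => (1 : ℝ)) ≠ 0 :=
    fun h => one_ne_zero (congrFun (congrArg Prod.snd h) 0)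
  refine ⟨?_, ratioSup_le (fun _ => linf_pos) hupper⟩
  calc 1 / 2 * Real.sqrt n * Real.log n
      ≤ znorm ((0 : Fin n → ℝ), fun _ : Fin n => (1 : ℝ)) /
          linf ((0 : Fin n → ℝ), fun _ : Fin n => (1 : ℝ)) := by
        rw [znorm_zero_one, linf_zero_one, div_one]
        nlinarith [Real.sqrt_nonneg n]
    _ ≤ _ := div_le_ratioSup (fun _ => linf_pos) hupper hx₀
end
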